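/- arXiv:2108.06832 — 2 statements merged into one kernel-verified Lean document; each statement's English description precedes it below -/
import Mathlib

section
/- Let π be a quasi-decomposition of H under KB with type (m, n, p, e, re, rm, em), and let ke, km be the attributes of KB. Then π is incompletable (has infinite cost) if any of the following holds: (a) p = re = ke = 0; (b) m + n ≤ 4, rm = km = 0, and re = ke = 0; (c) m + n − e ≤ 3 and rm = km = 0; (d) m + n ≤ 3, p = ke = km = 0, and re = rm = em = 1. -/
attribute [local instance] Classical.propDecidable

/-- A Mahjong tile: a colour in {0,1,2} and a number in {1,...,9}. -/
abbrev Tile : Type := Fin 3 × Fin 9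

/-- A `k`-tile: a multiset of `k` tiles in which no tile occurs more than 4 times. -/
def IsKTile (k : ℕ) (H : Multiset Tile) : Prop :=
  Multiset.card H = k ∧ ∀ t : Tile, H.count t ≤ 4

/-- A pong: three identical tiles. -/
def IsPong (s : Multiset Tile) : Prop := ∃ t : Tile, s = {t, t, t}

/-- A chow: three consecutive tiles of the same colour. -/
def IsChow (s : Multiset Tile) : Prop :=
  ∃ (c : Fin 3) (i j k : Fin 9),
    (j : ℕ) = (i : ℕ) + 1 ∧ (k : ℕ) = (i : ℕ) + 2 ∧ s = {(c, i), (c, j), (c, k)}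

/-- A meld: a pong or a chow. -/
def IsMeld (s : Multiset Tile) : Prop := IsPong s ∨ IsChow s

/-- A pair: two identical tiles. -/
def IsPair (s : Multiset Tile) : Prop := ∃ t : Tile, s = {t, t}

/-- A pchow: two tiles that become a chow after adding one appropriate tile. -/
def IsPchow (s : Multiset Tile) : Prop := ∃ t : Tile, IsChow (t ::ₘ s)

/-- A pmeld: a pchow or a pair. -/
def IsPmeld (s : Multiset Tile) : Prop := IsPchow s ∨ IsPair s

/-- `π` is a decomposition of `H` into four melds and one pair (the eye). -/
def IsDecompOf (π : Fin 5 → Multiset Tile) (H : Multiset Tile) : Prop :=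
  (∑ i, π i) = H ∧ (∀ i : Fin 5, (i : ℕ) < 4 → IsMeld (π i)) ∧ IsPair (π 4)

/-- A 14-tile is complete (winning) if it decomposes into four melds and one pair. -/
def Complete (H : Multiset Tile) : Prop := ∃ π : Fin 5 → Multiset Tile, IsDecompOf π H

/-- `H[t/t']`: replace one copy of `t` in `H` by `t'`. -/
def replaceTile (H : Multiset Tile) (t t' : Tile) : Multiset Tile := t' ::ₘ H.erase t

/-- `Reach H k`: `H` can be made complete with `k` (legal) tile changes. -/
inductive Reach : Multiset Tile → ℕ → Prop
  | zero {H : Multiset Tile} : Complete H → Reach H 0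
  | succ {H : Multiset Tile} {l : ℕ} (t t' : Tile) :
      t ∈ H → (∀ s : Tile, (replaceTile H t t').count s ≤ 4) →
      Reach (replaceTile H t t') l → Reach H (l + 1)

/-- The (plain) deficiency number of a 14-tile. -/
noncomputable def dfncy (H : Multiset Tile) : ℕ∞ :=
  sInf {c : ℕ∞ | ∃ k : ℕ, Reach H k ∧ c = (k : ℕ∞)}

/-- A knowledge base assigns each tile kind a multiplicity in {0,...,4}. -/
def IsKB (KB : Tile → ℕ) : Prop := ∀ t : Tile, KB t ≤ 4

/-- `H` and `KB` are compatible: each tile occurs at most 4 times in total. -/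
def KBCompatible (H : Multiset Tile) (KB : Tile → ℕ) : Prop :=
  ∀ t : Tile, H.count t + KB t ≤ 4

/-- `KB ⊖ t`: remove one copy of `t` from the knowledge base. -/
noncomputable def kbRemove (KB : Tile → ℕ) (t : Tile) : Tile → ℕ :=
  Function.update KB t (KB t - 1)

/-- `ReachKB H KB k`: `H` can be made complete with `k` tile changes,
replacement tiles being drawn from (and removed from) `KB`. -/
inductive ReachKB : Multiset Tile → (Tile → ℕ) → ℕ → Prop
  | zero {H : Multiset Tile} {KB : Tile → ℕ} : Complete H → ReachKB H KB 0
  | succ {H : Multiset Tile} {KB : Tile → ℕ} {l : ℕ} (t t' : Tile) :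
      t ∈ H → 0 < KB t' →
      ReachKB (replaceTile H t t') (kbRemove KB t') l → ReachKB H KB (l + 1)

/-- The knowledge-aware deficiency number of a 14-tile (⊤ if incompletable). -/
noncomputable def dfncyKB (H : Multiset Tile) (KB : Tile → ℕ) : ℕ∞ :=
  sInf {c : ℕ∞ | ∃ k : ℕ, ReachKB H KB k ∧ c = (k : ℕ∞)}

/-- A pre-decomposition (pDCMP) of `H`: five pairwise disjoint sub-multisets of `H`;
the last is a pair, a single tile, or empty; each of the first four is a meld,
a pmeld, a single tile, or empty. -/
def IsPDCMP (H : Multiset Tile) (π : Fin 5 → Multiset Tile) : Prop :=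
  (∑ i, π i) ≤ H ∧
  (IsPair (π 4) ∨ Multiset.card (π 4) ≤ 1) ∧
  (∀ i : Fin 5, (i : ℕ) < 4 →
    IsMeld (π i) ∨ IsPmeld (π i) ∨ Multiset.card (π i) ≤ 1)

/-- A pDCMP is completable if some decomposition (four melds and a pair, using
each tile at most 4 times in total) is finer than it. -/
def PDCompletable (π : Fin 5 → Multiset Tile) : Prop :=
  ∃ ρ : Fin 5 → Multiset Tile, (∀ i, π i ≤ ρ i) ∧
    (∀ i : Fin 5, (i : ℕ) < 4 → IsMeld (ρ i)) ∧ IsPair (ρ 4) ∧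
    (∀ t : Tile, (∑ i, ρ i).count t ≤ 4)

/-- The cost of a pDCMP: the number of missing tiles needed to complete it;
infinite if it is incompletable. -/
noncomputable def pdCost (π : Fin 5 → Multiset Tile) : ℕ∞ :=
  if PDCompletable π then ((14 - ∑ i, Multiset.card (π i) : ℕ) : ℕ∞) else ⊤

/-- A pmeld `s` is completable under `KB` if `KB` has a tile completing it into a meld. -/
def CompletablePmeld (KB : Tile → ℕ) (s : Multiset Tile) : Prop :=
  ∃ t : Tile, 0 < KB t ∧ IsMeld (t ::ₘ s)

/-- A quasi-decomposition (qDCMP) of `H` under `KB`: at most five pairwise disjoint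
sub-multisets of `H`, each a meld, pair, or pchow; every pchow completable under `KB`;
at most one incompletable pair; and containing a pair if it has five elements. -/
def IsQDCMP (KB : Tile → ℕ) (H : Multiset Tile) (π : Multiset (Multiset Tile)) : Prop :=
  Multiset.card π ≤ 5 ∧
  π.sum ≤ H ∧
  (∀ s ∈ π, IsMeld s ∨ IsPair s ∨ IsPchow s) ∧
  (∀ s ∈ π, IsPchow s → CompletablePmeld KB s) ∧
  Multiset.card (π.filter fun s => IsPair s ∧ ¬ CompletablePmeld KB s) ≤ 1 ∧
  (Multiset.card π = 5 → ∃ s ∈ π, IsPair s)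

/-- The remainder of `π` in `H`: the tiles of `H` not used by `π`. -/
def remainderOf (H : Multiset Tile) (π : Multiset (Multiset Tile)) : Multiset Tile :=
  H - π.sum

/-- A completion scheme `P` for a qDCMP `π` of `H` under `KB`: five groups, each a
base plus tiles borrowed from `KB`; every part of `π` is a base; every other base is
a seed of at most one tile recycled from the remainder; borrowed tiles respect the
multiplicities of `KB`; the groups form four melds and one pair (the eye). -/
def IsQCompletion (KB : Tile → ℕ) (H : Multiset Tile) (π : Multiset (Multiset Tile))
    (P : Multiset (Multiset Tile × Multiset Tile)) : Prop :=
  Multiset.card P = 5 ∧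
  π ≤ P.map Prod.fst ∧
  (∀ s ∈ P.map Prod.fst - π, Multiset.card s ≤ 1) ∧
  (P.map Prod.fst - π).sum ≤ remainderOf H π ∧
  (∀ t : Tile, ((P.map Prod.snd).sum).count t ≤ KB t) ∧
  (∃ q ∈ P, IsPair (q.1 + q.2) ∧ ∀ r ∈ P.erase q, IsMeld (r.1 + r.2))

/-- The cost of a qDCMP under `KB`: the minimum number of tiles borrowed from `KB`
over all completion schemes (⊤ if `π` is incompletable). -/
noncomputable def qCost (KB : Tile → ℕ) (H : Multiset Tile)
    (π : Multiset (Multiset Tile)) : ℕ∞ :=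
  sInf {c : ℕ∞ | ∃ P : Multiset (Multiset Tile × Multiset Tile),
    IsQCompletion KB H π P ∧ c = (Multiset.card (P.map Prod.snd).sum : ℕ∞)}

/-- `m`: the number of melds in `π`. -/
noncomputable def attrM (π : Multiset (Multiset Tile)) : ℕ :=
  Multiset.card (π.filter IsMeld)

/-- `n`: the number of pmelds (pchows and pairs) in `π`. -/
noncomputable def attrN (π : Multiset (Multiset Tile)) : ℕ :=
  Multiset.card (π.filter IsPmeld)

/-- `p`: the number of pairs in `π`. -/
noncomputable def attrP (π : Multiset (Multiset Tile)) : ℕ :=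
  Multiset.card (π.filter IsPair)

/-- `e`: the number of pairs in `π` incompletable under `KB`. -/
noncomputable def attrE (KB : Tile → ℕ) (π : Multiset (Multiset Tile)) : ℕ :=
  Multiset.card (π.filter fun s => IsPair s ∧ ¬ CompletablePmeld KB s)

/-- `re = 1` iff the remainder has a tile with an identical copy in `KB`. -/
noncomputable def attrRe (KB : Tile → ℕ) (H : Multiset Tile)
    (π : Multiset (Multiset Tile)) : ℕ :=
  if ∃ t ∈ remainderOf H π, 0 < KB t then 1 else 0

/-- A tile `t` can be extended into a meld using two tiles available in `KB`. -/
def CanStartMeld (KB : Tile → ℕ) (t : Tile) : Prop :=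
  ∃ v : Multiset Tile, Multiset.card v = 2 ∧ (∀ s : Tile, v.count s ≤ KB s) ∧
    IsMeld (t ::ₘ v)

/-- `rm = 1` iff the remainder has a tile that can evolve into a meld given `KB`. -/
noncomputable def attrRm (KB : Tile → ℕ) (H : Multiset Tile)
    (π : Multiset (Multiset Tile)) : ℕ :=
  if ∃ t ∈ remainderOf H π, CanStartMeld KB t then 1 else 0

/-- One can simultaneously start the eye from one tile of `R` and a meld from another
tile of `R`, jointly respecting the multiplicities of `KB`. -/
def CanEyeAndMeld (KB : Tile → ℕ) (R : Multiset Tile) : Prop :=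
  ∃ (t₁ t₂ : Tile) (u v : Multiset Tile),
    t₁ ::ₘ ({t₂} : Multiset Tile) ≤ R ∧ Multiset.card u = 1 ∧ Multiset.card v = 2 ∧
    (∀ s : Tile, (u + v).count s ≤ KB s) ∧ IsPair (t₁ ::ₘ u) ∧ IsMeld (t₂ ::ₘ v)

/-- `em = 1` iff `e = 0`, `re = rm = 1`, and there is an eye-meld conflict. -/
noncomputable def attrEm (KB : Tile → ℕ) (H : Multiset Tile)
    (π : Multiset (Multiset Tile)) : ℕ :=
  if attrE KB π = 0 ∧ attrRe KB H π = 1 ∧ attrRm KB H π = 1 ∧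
      ¬ CanEyeAndMeld KB (remainderOf H π) then 1 else 0

/-- `ke = 1` iff the knowledge base contains a pair. -/
noncomputable def kbKe (KB : Tile → ℕ) : ℕ :=
  if ∃ t : Tile, 2 ≤ KB t then 1 else 0

/-- `km = 1` iff the knowledge base contains a meld. -/
noncomputable def kbKm (KB : Tile → ℕ) : ℕ :=
  if ∃ s : Multiset Tile, IsMeld s ∧ ∀ t : Tile, s.count t ≤ KB t then 1 else 0

/-- Two tiles are KB-connected (w.r.t. `H` and `KB`): equal, or some tile of `H` or
`KB` makes a chow together with them. -/
def KBConn (KB : Tile → ℕ) (H : Multiset Tile) (t t' : Tile) : Prop :=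
  t = t' ∨ ∃ u : Tile, (u ∈ H ∨ 0 < KB u) ∧ IsChow {t, t', u}

/-- A KB-block of `H`: a nonempty monochromatic sub-multiset of `H`, closed under
KB-connection within `H` (with full multiplicities) and KB-connected within `H`. -/
def IsKBBlock (KB : Tile → ℕ) (H : Multiset Tile) (b : Multiset Tile) : Prop :=
  b ≠ 0 ∧ b ≤ H ∧ (∃ c : Fin 3, ∀ t ∈ b, t.1 = c) ∧
  (∀ t ∈ b, ∀ t' : Tile, KBConn KB H t t' → H.count t' ≤ b.count t') ∧
  (∀ t ∈ b, ∀ t' ∈ b,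
    Relation.ReflTransGen (fun x y : Tile => y ∈ H ∧ KBConn KB H x y) t t')

/-- The restriction `π↓b` of a qDCMP `π` to a block `b`: the melds and pmelds of `π`
contained in `b`. -/
noncomputable def restrictQ (π : Multiset (Multiset Tile)) (b : Multiset Tile) :
    Multiset (Multiset Tile) :=
  π.filter fun s => s ≤ b

/-- The `Decide` function: the cost assigned to a (global) type, where 100 plays the
role of infinity. -/
noncomputable def Decide (m n p e re rm em ke km : ℕ) : ℕ :=
  if (p = 0 ∧ re = 0 ∧ ke = 0) ∨
     (m + n ≤ 4 ∧ re = 0 ∧ ke = 0 ∧ rm = 0 ∧ km = 0) ∨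
     (m + n ≤ 3 + e ∧ rm = 0 ∧ km = 0) ∨
     (m + n ≤ 3 ∧ p = 0 ∧ ke = 0 ∧ km = 0 ∧ em = 1) then 100
  else if 4 < m + n then 4 - m
  else if m + n = 4 then
    if (e = 0 ∧ re = 1) ∨ (0 < p ∧ rm = 1) then 4 - m + 1 else 4 - m + 2
  else
    if e = 1 then (n - 1) + (2 * rm + 3 * (1 - rm)) * (4 - m - n + 1)
    else if p = 0 then
      n + (2 * rm + 3 * (1 - rm)) * (4 - m - n) + (re + 2 * (1 - re)) + em
    else
      min (n + (2 * rm + 3 * (1 - rm)) * (4 - m - n) + (re + 2 * (1 - re)))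
          (n - 1 + (2 * rm + 3 * (1 - rm)) * (4 - m - n + 1))

/-- The value returned by the block deficiency algorithm: the minimum, over all
choices of one local qDCMP per KB-block (whose joined global type is not discarded),
of the cost `Decide` assigns to the joined global type. -/
noncomputable def blockDfncy (KB : Tile → ℕ) (H : Multiset Tile)
    (B : Finset (Multiset Tile)) : ℕ :=
  sInf {c : ℕ | ∃ f : Multiset Tile → Multiset (Multiset Tile),
    (∀ b ∈ B, IsQDCMP KB b (f b)) ∧
    (∑ b ∈ B, attrE KB (f b)) ≤ 1 ∧
    (∑ b ∈ B, attrM (f b)) + (∑ b ∈ B, attrN (f b)) ≤ 5 ∧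
    ¬((∑ b ∈ B, attrM (f b)) + (∑ b ∈ B, attrN (f b)) = 5 ∧
       (∑ b ∈ B, attrP (f b)) = 0) ∧
    c = Decide (∑ b ∈ B, attrM (f b)) (∑ b ∈ B, attrN (f b))
          (∑ b ∈ B, attrP (f b)) (∑ b ∈ B, attrE KB (f b))
          (B.sup fun b => attrRe KB b (f b)) (B.sup fun b => attrRm KB b (f b))
          (if ∃ b ∈ B, attrEm KB b (f b) = 1 ∧
              ∀ b' ∈ B, b' ≠ b → attrRe KB b' (f b') = 0 ∧ attrRm KB b' (f b') = 0
           then 1 else 0)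
          (kbKe KB) (kbKm KB)}



section IncompletableHelpers

private lemma if_eq_zero' {c : Prop} [Decidable c] (h : (if c then (1:ℕ) else 0) = 0) : ¬ c := by
  intro hc; rw [if_pos hc] at h; exact one_ne_zero h

private lemma if_eq_one' {c : Prop} [Decidable c] (h : (if c then (1:ℕ) else 0) = 1) : c := by
  by_contra hc; rw [if_neg hc] at h; exact zero_ne_one h

private lemma isChow_count_le_one {s : Multiset Tile} (hs : IsChow s) (t : Tile) :
    s.count t ≤ 1 := by
  obtain ⟨c, i, j, k, hj, hk, rfl⟩ := hs
  have hnd : ({(c, i), (c, j), (c, k)} : Multiset Tile).Nodup := by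
    simp only [Multiset.insert_eq_cons, Multiset.nodup_cons, Multiset.mem_cons,
      Multiset.mem_singleton, Multiset.nodup_singleton, and_true]
    refine ⟨?_, ?_⟩
    · rintro (h | h) <;>
      · have h2 := congrArg (fun x : Tile => (x.2 : ℕ)) h
        dsimp only at h2
        omega
    · intro h
      have h2 := congrArg (fun x : Tile => (x.2 : ℕ)) h
      dsimp only at h2
      omega
  exact Multiset.nodup_iff_count_le_one.mp hnd t

private lemma isMeld_card {s : Multiset Tile} (hs : IsMeld s) : Multiset.card s = 3 := by
  rcases hs with ⟨t, rfl⟩ | ⟨c, i, j, k, _, _, rfl⟩ <;> rfl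

private lemma isPair_card {s : Multiset Tile} (hs : IsPair s) : Multiset.card s = 2 := by
  obtain ⟨t, rfl⟩ := hs; rfl

private lemma isPchow_card {s : Multiset Tile} (hs : IsPchow s) : Multiset.card s = 2 := by
  obtain ⟨t, ht⟩ := hs
  have h3 := isMeld_card (Or.inr ht)
  rw [Multiset.card_cons] at h3
  omega

private lemma not_isPair_of_isPchow {s : Multiset Tile} (hp : IsPchow s) : ¬ IsPair s := by
  rintro ⟨t, rfl⟩
  obtain ⟨u, hu⟩ := hp
  have h1 := isChow_count_le_one hu t
  have h2 : 2 ≤ (u ::ₘ ({t, t} : Multiset Tile)).count t := by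
    have : ({t, t} : Multiset Tile).count t = 2 := by
      simp [Multiset.insert_eq_cons, Multiset.count_cons]
    rw [Multiset.count_cons]
    omega
  omega

private lemma isPmeld_card {s : Multiset Tile} (hs : IsPmeld s) : Multiset.card s = 2 := by
  rcases hs with h | h
  · exact isPchow_card h
  · exact isPair_card h

private lemma pair_meld_extend {s w : Multiset Tile} (hp : IsPair s) (hm : IsMeld (s + w)) :
    ∃ t, s = {t, t} ∧ w = {t} := by
  obtain ⟨t, rfl⟩ := hp
  have hcnt : 2 ≤ (({t, t} : Multiset Tile) + w).count t := by
    have : ({t, t} : Multiset Tile).count t = 2 := by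
      simp [Multiset.insert_eq_cons, Multiset.count_cons]
    rw [Multiset.count_add]
    omega
  rcases hm with ⟨u, hu⟩ | hchow
  · have htu : t = u := by
      by_contra hne
      rw [hu] at hcnt
      simp [Multiset.insert_eq_cons, Multiset.count_cons, Multiset.count_singleton, hne] at hcnt
    subst htu
    refine ⟨t, rfl, ?_⟩
    have heq : ({t, t} : Multiset Tile) + w = {t, t} + {t} := by
      rw [hu]; rfl
    exact add_left_cancel heq
  · have := isChow_count_le_one hchow t
    omega

private lemma msum_mono {s t : Multiset (Multiset Tile)} (h : s ≤ t) : s.sum ≤ t.sum := by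
  obtain ⟨u, rfl⟩ := Multiset.le_iff_exists_add.mp h
  rw [Multiset.sum_add]
  exact Multiset.le_add_right _ _

end IncompletableHelpers

/-- Sufficient conditions for a quasi-decomposition to be incompletable. -/
theorem qdcmp_incompletable (H : Multiset Tile) (KB : Tile → ℕ)
    (π : Multiset (Multiset Tile))
    (hH : IsKTile 14 H) (hKB : IsKB KB) (hcomp : KBCompatible H KB)
    (hpi : IsQDCMP KB H π)
    (m n p e re rm em ke km : ℕ)
    (hm : m = attrM π) (hn : n = attrN π) (hp : p = attrP π) (he : e = attrE KB π)
    (hre : re = attrRe KB H π) (hrm : rm = attrRm KB H π) (hem : em = attrEm KB H π)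
    (hke : ke = kbKe KB) (hkm : km = kbKm KB)
    (hcond :
      (p = 0 ∧ re = 0 ∧ ke = 0) ∨
      (m + n ≤ 4 ∧ rm = 0 ∧ km = 0 ∧ re = 0 ∧ ke = 0) ∨
      (m + n ≤ 3 + e ∧ rm = 0 ∧ km = 0) ∨
      (m + n ≤ 3 ∧ p = 0 ∧ ke = 0 ∧ km = 0 ∧ re = 1 ∧ rm = 1 ∧ em = 1)) :
    qCost KB H π = ⊤ := by
  subst hm hn hp he hre hrm hem hke hkm
  obtain ⟨hπ5, hπH, hparts, hpch, hE1, hfive⟩ := hpi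
  have hcardπ : Multiset.card π = attrM π + attrN π := by
    have h1 : π.filter (fun s => ¬ IsMeld s) = π.filter IsPmeld := by
      apply Multiset.filter_congr
      intro s hs
      constructor
      · intro hnm
        rcases hparts s hs with h | h | h
        · exact absurd h hnm
        · exact Or.inr h
        · exact Or.inl h
      · intro hpm hm2
        have := isPmeld_card hpm
        have := isMeld_card hm2
        omega
    calc Multiset.card π
        = Multiset.card (π.filter IsMeld + π.filter (fun s => ¬ IsMeld s)) := by
          rw [Multiset.filter_add_not]
      _ = attrM π + attrN π := by
          rw [Multiset.card_add, h1]
          unfold attrM attrN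
          rfl
  suffices hnoP : ∀ P, ¬ IsQCompletion KB H π P by
    unfold qCost
    convert sInf_empty
    · rfl
    apply Set.eq_empty_iff_forall_notMem.mpr
    rintro c ⟨P, hP, -⟩
    exact hnoP P hP
  intro P hP
  obtain ⟨hP5, hπle, hseed1, hseedR, hKBelem, q, hqP, hqpair, hmelds⟩ := hP
  have hPfst : P.map Prod.fst = q.1 ::ₘ (P.erase q).map Prod.fst := by
    conv_lhs => rw [← Multiset.cons_erase hqP]
    rw [Multiset.map_cons]
  have hseeds_le : P.map Prod.fst - π ≤ q.1 ::ₘ (P.erase q).map Prod.fst := by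
    rw [← hPfst]; exact tsub_le_self
  have hcard_fst : Multiset.card (P.map Prod.fst) = 5 := by
    rw [Multiset.card_map, hP5]
  have hcard_seeds : Multiset.card (P.map Prod.fst - π) = 5 - Multiset.card π := by
    obtain ⟨u, hu⟩ := Multiset.le_iff_exists_add.mp hπle
    have h5 : Multiset.card π + Multiset.card u = 5 := by
      rw [← Multiset.card_add, ← hu, hcard_fst]
    rw [hu, add_tsub_cancel_left]
    omega
  have hseed_in_R : ∀ s ∈ P.map Prod.fst - π, ∀ t ∈ s, t ∈ remainderOf H π :=
    fun s hs t ht =>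
      Multiset.mem_of_le hseedR (Multiset.mem_of_le (Multiset.le_sum_of_mem hs) ht)
  have hsnd : ∀ g ∈ P, ∀ t, (g.2).count t ≤ KB t := fun g hg t =>
    le_trans (Multiset.count_le_of_le t (Multiset.le_sum_of_mem
      (Multiset.mem_map_of_mem Prod.snd hg))) (hKBelem t)
  obtain ⟨te, hte⟩ := hqpair
  have hq12card : Multiset.card q.1 + Multiset.card q.2 = 2 := by
    have h := isPair_card ⟨te, hte⟩
    rw [Multiset.card_add] at h
    exact h
  have hqbase : q.1 ∈ π ∨ q.1 ∈ P.map Prod.fst - π := by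
    by_cases h : q.1 ∈ π
    · exact Or.inl h
    · right
      have h1 := Multiset.count_pos.mpr (Multiset.mem_map_of_mem Prod.fst hqP)
      rw [← Multiset.count_pos, Multiset.count_sub, Multiset.count_eq_zero.mpr h]
      omega
  have hq1π_pair : q.1 ∈ π → IsPair q.1 := by
    intro h
    rcases hparts _ h with hm' | hp' | hc'
    · have := isMeld_card hm'
      omega
    · exact hp'
    · exfalso
      have hc2 := isPchow_card hc'
      have hq20 : q.2 = 0 := Multiset.card_eq_zero.mp (by omega)
      exact not_isPair_of_isPchow hc' ⟨te, by rw [← hte, hq20, add_zero]⟩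
  have eyeSeed : q.1 ∈ P.map Prod.fst - π →
      (∃ t, q.1 = {t} ∧ t ∈ remainderOf H π ∧ q.2 = {t} ∧ 0 < KB t) ∨
      (∃ t, 2 ≤ KB t) := by
    intro hq1
    rcases Nat.le_one_iff_eq_zero_or_eq_one.mp (hseed1 q.1 hq1) with h0 | h1
    · right
      have hq10 : q.1 = 0 := Multiset.card_eq_zero.mp h0
      have hq2 : q.2 = {te, te} := by rw [← hte, hq10, zero_add]
      refine ⟨te, ?_⟩
      have h2 : (q.2).count te = 2 := by
        rw [hq2]; simp [Multiset.insert_eq_cons, Multiset.count_cons]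
      have := hsnd q hqP te
      omega
    · left
      obtain ⟨u, hu⟩ := Multiset.card_eq_one.mp h1
      have hu_mem : u ∈ q.1 + q.2 :=
        Multiset.mem_of_le (Multiset.le_add_right _ _)
          (by rw [hu]; exact Multiset.mem_singleton_self u)
      rw [hte] at hu_mem
      have hut : u = te := by
        simpa [Multiset.insert_eq_cons] using hu_mem
      rw [hut] at hu
      have hte2 := hte
      rw [hu, Multiset.singleton_add] at hte2
      simp only [Multiset.insert_eq_cons] at hte2
      have hq2 : q.2 = {te} := (Multiset.cons_inj_right te).mp hte2
      have hKBte : 0 < KB te := by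
        have := hsnd q hqP te
        rw [hq2, Multiset.count_singleton_self] at this
        omega
      exact ⟨te, hu, hseed_in_R _ hq1 te
        (by rw [hu]; exact Multiset.mem_singleton_self te), hq2, hKBte⟩
  have meldSeed : ∀ g ∈ P.erase q, g.1 ∈ P.map Prod.fst - π →
      (∃ t, g.1 = {t} ∧ t ∈ remainderOf H π ∧ Multiset.card g.2 = 2 ∧
        IsMeld (t ::ₘ g.2)) ∨
      (IsMeld g.2 ∧ ∀ t, (g.2).count t ≤ KB t) := by
    intro g hg hg1
    have hgP : g ∈ P := Multiset.mem_of_mem_erase hg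
    have hmg : IsMeld (g.1 + g.2) := hmelds g hg
    rcases Nat.le_one_iff_eq_zero_or_eq_one.mp (hseed1 g.1 hg1) with h0 | h1
    · right
      have hg10 : g.1 = 0 := Multiset.card_eq_zero.mp h0
      rw [hg10, zero_add] at hmg
      exact ⟨hmg, hsnd g hgP⟩
    · left
      obtain ⟨t, ht⟩ := Multiset.card_eq_one.mp h1
      have hcard3 := isMeld_card hmg
      rw [Multiset.card_add, ht] at hcard3
      have hc2 : Multiset.card g.2 = 2 := by
        simp only [Multiset.card_singleton] at hcard3; omega
      rw [ht, Multiset.singleton_add] at hmg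
      exact ⟨t, ht, hseed_in_R _ hg1 t
        (by rw [ht]; exact Multiset.mem_singleton_self t), hc2, hmg⟩
  have getF : ∀ s ∈ (P.erase q).map Prod.fst, ∃ g ∈ P.erase q, g.1 = s := by
    intro s hs
    obtain ⟨g, hg, rfl⟩ := Multiset.mem_map.mp hs
    exact ⟨g, hg, rfl⟩
  have meldContra : attrRm KB H π = 0 → kbKm KB = 0 →
      ∀ g ∈ P.erase q, g.1 ∉ P.map Prod.fst - π := by
    intro hrm0 hkm0 g hg hg1
    have hRm : ¬ ∃ t ∈ remainderOf H π, CanStartMeld KB t := by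
      simp only [attrRm] at hrm0; exact if_eq_zero' hrm0
    have hKm : ¬ ∃ s, IsMeld s ∧ ∀ t, s.count t ≤ KB t := by
      simp only [kbKm] at hkm0; exact if_eq_zero' hkm0
    rcases meldSeed g hg hg1 with ⟨t, _, htR, hc2, hmv⟩ | ⟨h1, h2⟩
    · exact hRm ⟨t, htR, g.2, hc2, hsnd g (Multiset.mem_of_mem_erase hg), hmv⟩
    · exact hKm ⟨g.2, h1, h2⟩
  have eyeContra : attrRe KB H π = 0 → kbKe KB = 0 →
      q.1 ∉ P.map Prod.fst - π := by
    intro hre0 hke0 hq1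
    have hRe : ¬ ∃ t ∈ remainderOf H π, 0 < KB t := by
      simp only [attrRe] at hre0; exact if_eq_zero' hre0
    have hKe : ¬ ∃ t, 2 ≤ KB t := by
      simp only [kbKe] at hke0; exact if_eq_zero' hke0
    rcases eyeSeed hq1 with ⟨t, _, htR, _, hKBt⟩ | h2
    · exact hRe ⟨t, htR, hKBt⟩
    · exact hKe h2
  rcases hcond with ⟨hp0, hre0, hke0⟩ | ⟨hmn4, hrm0, hkm0, hre0, hke0⟩ |
    ⟨hmn3e, hrm0, hkm0⟩ | ⟨hmn3, hp0, hke0, hkm0, -, -, hem1⟩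
  · -- case (a)
    have hnopair : ∀ s ∈ π, ¬ IsPair s := by
      simp only [attrP] at hp0
      exact Multiset.filter_eq_nil.mp (Multiset.card_eq_zero.mp hp0)
    rcases hqbase with h | h
    · exact hnopair _ h (hq1π_pair h)
    · exact eyeContra hre0 hke0 h
  · -- case (b)
    have hpos : 0 < Multiset.card (P.map Prod.fst - π) := by
      rw [hcard_seeds]
      omega
    obtain ⟨s, hs⟩ := Multiset.card_pos_iff_exists_mem.mp hpos
    have hsF := Multiset.mem_of_le hseeds_le hs
    rcases Multiset.mem_cons.mp hsF with rfl | hsF'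
    · exact eyeContra hre0 hke0 hs
    · obtain ⟨g, hg, rfl⟩ := getF s hsF'
      exact meldContra hrm0 hkm0 g hg hs
  · -- case (c)
    have hE : attrE KB π ≤ 1 := hE1
    by_cases he0 : attrE KB π = 0
    · have hpos : 0 < Multiset.card ((P.map Prod.fst - π).erase q.1) := by
        by_cases hq1 : q.1 ∈ P.map Prod.fst - π
        · rw [Multiset.card_erase_of_mem hq1, Nat.pred_eq_sub_one, hcard_seeds]
          omega
        · rw [Multiset.erase_of_notMem hq1, hcard_seeds]
          omega
      obtain ⟨s, hs⟩ := Multiset.card_pos_iff_exists_mem.mp hpos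
      have hs_seed : s ∈ P.map Prod.fst - π := Multiset.mem_of_mem_erase hs
      have hsF : s ∈ (P.erase q).map Prod.fst :=
        Multiset.mem_of_le (Multiset.erase_le_iff_le_cons.mpr hseeds_le) hs
      obtain ⟨g, hg, rfl⟩ := getF s hsF
      exact meldContra hrm0 hkm0 g hg hs_seed
    · have he1' : attrE KB π = 1 := by omega
      obtain ⟨s₀, hs₀π, hs₀pair, hs₀inc⟩ :
          ∃ s₀ ∈ π, IsPair s₀ ∧ ¬ CompletablePmeld KB s₀ := by
        have hpos : 0 < Multiset.card
            (π.filter fun s => IsPair s ∧ ¬ CompletablePmeld KB s) := by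
          simp only [attrE] at he1'; omega
        obtain ⟨s₀, hs₀⟩ := Multiset.card_pos_iff_exists_mem.mp hpos
        have h := Multiset.mem_filter.mp hs₀
        exact ⟨s₀, h.1, h.2⟩
      have pairMeld : ∀ g ∈ P.erase q, IsPair g.1 → CompletablePmeld KB g.1 := by
        intro g hg hgpair
        obtain ⟨t, h1, h2⟩ := pair_meld_extend hgpair (hmelds g hg)
        refine ⟨t, ?_, Or.inl ⟨t, by rw [h1]; rfl⟩⟩
        have h3 := hsnd g (Multiset.mem_of_mem_erase hg) t
        rw [h2, Multiset.count_singleton_self] at h3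
        omega
      by_cases hq1s : q.1 = s₀
      · have hq1π : q.1 ∈ π := hq1s ▸ hs₀π
        have hπ' : π.erase q.1 ≤ (P.erase q).map Prod.fst :=
          Multiset.erase_le_iff_le_cons.mpr (by rw [← hPfst]; exact hπle)
        have hseeds_eq : P.map Prod.fst - π
            = (P.erase q).map Prod.fst - π.erase q.1 := by
          conv_lhs => rw [hPfst, ← Multiset.cons_erase hq1π]
          rw [Multiset.sub_cons, Multiset.erase_cons_head]
        have hcardF : Multiset.card ((P.erase q).map Prod.fst) = 4 := by
          rw [Multiset.card_map, Multiset.card_erase_of_mem hqP, hP5]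
          rfl
        have hπpos : 0 < Multiset.card π :=
          Multiset.card_pos.mpr (by
            intro h
            rw [h] at hq1π
            exact absurd hq1π (Multiset.notMem_zero _))
        have hcardsπ : Multiset.card (π.erase q.1) = Multiset.card π - 1 := by
          rw [Multiset.card_erase_of_mem hq1π, Nat.pred_eq_sub_one]
        have hpos : 0 < Multiset.card ((P.erase q).map Prod.fst - π.erase q.1) := by
          obtain ⟨u, hu⟩ := Multiset.le_iff_exists_add.mp hπ'
          have hcards4 : Multiset.card (π.erase q.1) + Multiset.card u = 4 := by
            rw [← Multiset.card_add, ← hu, hcardF]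
          rw [hu, add_tsub_cancel_left]
          omega
        obtain ⟨s, hs⟩ := Multiset.card_pos_iff_exists_mem.mp hpos
        have hs_seed : s ∈ P.map Prod.fst - π := by rw [hseeds_eq]; exact hs
        have hsF : s ∈ (P.erase q).map Prod.fst := Multiset.mem_of_le tsub_le_self hs
        obtain ⟨g, hg, rfl⟩ := getF s hsF
        exact meldContra hrm0 hkm0 g hg hs_seed
      · have hs₀F : s₀ ∈ (P.erase q).map Prod.fst := by
          have h1 : 0 < Multiset.count s₀ π := Multiset.count_pos.mpr hs₀π
          have h2 := Multiset.count_le_of_le s₀ hπle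
          rw [hPfst, Multiset.count_cons_of_ne (fun h => hq1s h.symm)] at h2
          exact Multiset.count_pos.mp (by omega)
        obtain ⟨g, hg, hg1⟩ := getF s₀ hs₀F
        exact hs₀inc (hg1 ▸ pairMeld g hg (hg1.symm ▸ hs₀pair))
  · -- case (d)
    have hnoEM : ¬ CanEyeAndMeld KB (remainderOf H π) := by
      have h := if_eq_one' (show (if _ then (1:ℕ) else 0) = 1 by
        simpa only [attrEm] using hem1)
      exact h.2.2.2
    have hnopair : ∀ s ∈ π, ¬ IsPair s := by
      simp only [attrP] at hp0
      exact Multiset.filter_eq_nil.mp (Multiset.card_eq_zero.mp hp0)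
    have hKe : ¬ ∃ t, 2 ≤ KB t := by
      simp only [kbKe] at hke0; exact if_eq_zero' hke0
    have hKm : ¬ ∃ s, IsMeld s ∧ ∀ t, s.count t ≤ KB t := by
      simp only [kbKm] at hkm0; exact if_eq_zero' hkm0
    have hq1seed : q.1 ∈ P.map Prod.fst - π := by
      rcases hqbase with h | h
      · exact absurd (hq1π_pair h) (hnopair _ h)
      · exact h
    obtain ⟨t₁, hq1, ht₁R, hq2, -⟩ :
        ∃ t, q.1 = {t} ∧ t ∈ remainderOf H π ∧ q.2 = {t} ∧ 0 < KB t := by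
      rcases eyeSeed hq1seed with h | h
      · exact h
      · exact absurd h hKe
    have hcard_er : Multiset.card ((P.map Prod.fst - π).erase q.1)
        = Multiset.card (P.map Prod.fst - π) - 1 := by
      rw [Multiset.card_erase_of_mem hq1seed, Nat.pred_eq_sub_one]
    have hpos : 0 < Multiset.card ((P.map Prod.fst - π).erase q.1) := by
      rw [hcard_er, hcard_seeds]
      omega
    obtain ⟨s, hs⟩ := Multiset.card_pos_iff_exists_mem.mp hpos
    have hs_seed : s ∈ P.map Prod.fst - π := Multiset.mem_of_mem_erase hs
    have hsF : s ∈ (P.erase q).map Prod.fst :=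
      Multiset.mem_of_le (Multiset.erase_le_iff_le_cons.mpr hseeds_le) hs
    obtain ⟨g, hg, rfl⟩ := getF s hsF
    obtain ⟨t₂, hg1, ht₂R, hvcard, hmv⟩ :
        ∃ t, g.1 = {t} ∧ t ∈ remainderOf H π ∧ Multiset.card g.2 = 2 ∧
          IsMeld (t ::ₘ g.2) := by
      rcases meldSeed g hg hs_seed with h | ⟨h1, h2⟩
      · exact h
      · exact absurd ⟨g.2, h1, h2⟩ hKm
    apply hnoEM
    refine ⟨t₁, t₂, {t₁}, g.2, ?_, rfl, hvcard, ?_, ⟨t₁, rfl⟩, hmv⟩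
    · have h2 : ({g.1} : Multiset (Multiset Tile)) ≤ (P.map Prod.fst - π).erase q.1 :=
        Multiset.singleton_le.mpr hs
      have h1 : q.1 ::ₘ ({g.1} : Multiset (Multiset Tile)) ≤ P.map Prod.fst - π := by
        calc q.1 ::ₘ ({g.1} : Multiset (Multiset Tile))
            ≤ q.1 ::ₘ (P.map Prod.fst - π).erase q.1 := Multiset.cons_le_cons _ h2
          _ = P.map Prod.fst - π := Multiset.cons_erase hq1seed
      have h3 := le_trans (msum_mono h1) hseedR
      rw [Multiset.sum_cons, Multiset.sum_singleton, hq1, hg1,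
        Multiset.singleton_add] at h3
      exact h3
    · intro u
      have h1 : q ::ₘ ({g} : Multiset (Multiset Tile × Multiset Tile)) ≤ P := by
        calc q ::ₘ ({g} : Multiset (Multiset Tile × Multiset Tile))
            ≤ q ::ₘ P.erase q := Multiset.cons_le_cons _ (Multiset.singleton_le.mpr hg)
          _ = P := Multiset.cons_erase hqP
      have h2 : q.2 + g.2 ≤ (P.map Prod.snd).sum := by
        have h3 := msum_mono (Multiset.map_le_map (f := Prod.snd) h1)
        simpa using h3
      have h4 := le_trans (Multiset.count_le_of_le u h2) (hKBelem u)
      rw [← hq2]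
      exact h4
end

section
/- Let π be a quasi-decomposition of H under KB with type (m, n, p, e, re, rm, em). If m = 0 or m + n − e ≤ 2, then the cost of π under KB is at least 4. -/
attribute [local instance] Classical.propDecidable

private lemma card_of_meld {s : Multiset Tile} (h : IsMeld s) : Multiset.card s = 3 := by
  rcases h with ⟨t, rfl⟩ | ⟨c, i, j, k, _, _, rfl⟩ <;> simp [Multiset.insert_eq_cons]

private lemma card_of_pmeld {s : Multiset Tile} (h : IsPmeld s) : Multiset.card s = 2 := by
  rcases h with ⟨t, hc⟩ | ⟨t, rfl⟩
  · have h3 := card_of_meld (Or.inr hc)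
    simpa using h3
  · simp [Multiset.insert_eq_cons]

private lemma card_sum' (S : Multiset (Multiset Tile)) :
    Multiset.card S.sum = (S.map Multiset.card).sum := Multiset.card_join S

/-- If `m = 0` or `m + n - e ≤ 2`, the cost of a quasi-decomposition is at least 4. -/
theorem qdcmp_cost_ge_four (H : Multiset Tile) (KB : Tile → ℕ)
    (π : Multiset (Multiset Tile))
    (hH : IsKTile 14 H) (hKB : IsKB KB) (hcomp : KBCompatible H KB)
    (hpi : IsQDCMP KB H π)
    (m n p e re rm em ke km : ℕ)
    (hm : m = attrM π) (hn : n = attrN π) (hp : p = attrP π) (he : e = attrE KB π)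
    (hre : re = attrRe KB H π) (hrm : rm = attrRm KB H π) (hem : em = attrEm KB H π)
    (hke : ke = kbKe KB) (hkm : km = kbKm KB)
    (hcond : m = 0 ∨ m + n ≤ 2 + e) :
    (4 : ℕ∞) ≤ qCost KB H π := by
  refine le_sInf ?_
  rintro c ⟨P, hP, rfl⟩
  obtain ⟨hcard5, hle, hseed1, hseedR, hKBcount, q, hq, hqpair, hmelds⟩ := hP
  obtain ⟨hpi1, hpi2, hpi3, hpi4, hpi5, hpi6⟩ := hpi
  -- total tile count of the completed hand is 14
  set A : Multiset (Multiset Tile) := P.map Prod.fst with hA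
  set b : ℕ := Multiset.card (P.map Prod.snd).sum with hb
  have htot : Multiset.card A.sum + b = 14 := by
    have hsum : A.sum + (P.map Prod.snd).sum = (P.map fun r => r.1 + r.2).sum := by
      rw [hA, ← Multiset.sum_map_add]
    have h1 : Multiset.card A.sum + b = Multiset.card ((P.map fun r => r.1 + r.2).sum) := by
      rw [← hsum, Multiset.card_add]
    rw [h1, card_sum', Multiset.map_map]
    have hqe : q ::ₘ P.erase q = P := Multiset.cons_erase hq
    rw [← hqe, Multiset.map_cons, Multiset.sum_cons]
    have hq2 : (Multiset.card ∘ fun r : Multiset Tile × Multiset Tile => r.1 + r.2) q = 2 := by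
      obtain ⟨t, ht⟩ := hqpair
      simp only [Function.comp_apply, ht]
      simp [Multiset.insert_eq_cons]
    have herase : ((P.erase q).map (Multiset.card ∘ fun r : Multiset Tile × Multiset Tile => r.1 + r.2)) = Multiset.replicate 4 3 := by
      rw [Multiset.eq_replicate]
      constructor
      · rw [Multiset.card_map, Multiset.card_erase_of_mem hq, hcard5]; rfl
      · rintro x hx
        obtain ⟨r, hr, rfl⟩ := Multiset.mem_map.mp hx
        exact card_of_meld (hmelds r hr)
    rw [hq2, herase, Multiset.sum_replicate]
    simp
  -- structure of A
  have hcardA : Multiset.card A = 5 := by rw [hA, Multiset.card_map, hcard5]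
  have hAsplit : A - π + π = A := tsub_add_cancel_of_le hle
  have hcardAπ : Multiset.card (A - π) + Multiset.card π = 5 := by
    rw [← Multiset.card_add, hAsplit, hcardA]
  -- remainder seeds have at most card many tiles
  have hDsum : Multiset.card (A - π).sum ≤ Multiset.card (A - π) := by
    rw [card_sum']
    have := Multiset.sum_le_card_nsmul ((A - π).map Multiset.card) 1 ?_
    · simpa using this
    · rintro x hx
      obtain ⟨s, hs, rfl⟩ := Multiset.mem_map.mp hx
      exact hseed1 s hs
  -- cardinality of π.sum
  set mM : ℕ := Multiset.card (π.filter IsMeld) with hmM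
  set cN : ℕ := Multiset.card (π.filter fun s => ¬ IsMeld s) with hcN
  have hπcard : mM + cN = Multiset.card π := by
    rw [hmM, hcN, ← Multiset.card_add, Multiset.filter_add_not]
  have hπsum : Multiset.card π.sum ≤ 3 * mM + 2 * cN := by
    have hsplit : π.filter IsMeld + π.filter (fun s => ¬ IsMeld s) = π :=
      Multiset.filter_add_not _ _
    calc Multiset.card π.sum
        = Multiset.card (π.filter IsMeld).sum + Multiset.card (π.filter (fun s => ¬ IsMeld s)).sum := by
          rw [← Multiset.card_add, ← Multiset.sum_add, hsplit]
      _ ≤ 3 * mM + 2 * cN := by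
          gcongr
          · rw [card_sum']
            have := Multiset.sum_le_card_nsmul ((π.filter IsMeld).map Multiset.card) 3 ?_
            · simpa [mul_comm] using this
            · rintro x hx
              obtain ⟨s, hs, rfl⟩ := Multiset.mem_map.mp hx
              exact le_of_eq (card_of_meld (Multiset.mem_filter.mp hs).2)
          · rw [card_sum']
            have := Multiset.sum_le_card_nsmul ((π.filter (fun s => ¬ IsMeld s)).map Multiset.card) 2 ?_
            · simpa [mul_comm] using this
            · rintro x hx
              obtain ⟨s, hs, rfl⟩ := Multiset.mem_map.mp hx
              obtain ⟨hsπ, hsm⟩ := Multiset.mem_filter.mp hs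
              have := hpi3 s hsπ
              rcases this with h | h | h
              · exact absurd h hsm
              · exact le_of_eq (card_of_pmeld (Or.inr h))
              · exact le_of_eq (card_of_pmeld (Or.inl h))
  have hcardAsum : Multiset.card A.sum = Multiset.card (A - π).sum + Multiset.card π.sum := by
    rw [← Multiset.card_add, ← Multiset.sum_add, hAsplit]
  -- relations between attributes
  have hcNn : cN ≤ n := by
    rw [hn, attrN, hcN]
    apply Multiset.card_le_card
    rw [Multiset.le_filter]
    refine ⟨Multiset.filter_le _ _, ?_⟩
    intro a ha
    obtain ⟨haπ, ham⟩ := Multiset.mem_filter.mp ha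
    rcases hpi3 a haπ with h | h | h
    · exact absurd h ham
    · exact Or.inr h
    · exact Or.inl h
  have hen : e ≤ n := by
    rw [hn, attrN, he, attrE]
    apply Multiset.card_le_card
    rw [Multiset.le_filter]
    refine ⟨Multiset.filter_le _ _, ?_⟩
    intro a ha
    exact Or.inr (Multiset.mem_filter.mp ha).2.1
  have he1 : e ≤ 1 := by rw [he]; exact hpi5
  have hmeq : m = mM := by rw [hm, attrM, hmM]
  -- conclude
  have hfinal : 4 ≤ b := by omega
  exact_mod_cast hfinal
end
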